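/- arXiv:2410.00699 — 2 statements merged into one kernel-verified Lean document; each statement's English description precedes it below -/
import Mathlib

section
/- For any square matrix A ∈ ℝ^{p×p} and matrix B ∈ ℝ^{p×d}, there exists a vector β ∈ ℝ^p with ‖β‖₂ = ‖B‖_F such that Tr(Bᵀ A B) ≤ βᵀ A β. -/
/-!
With `b k` the columns of `B`, `Tr(Bᵀ A B) = ∑ k, b kᵀ A b k`. The quadratic form `x ↦ xᵀ A x`
attains its maximum `M` on the compact unit sphere at some `u`, and by homogeneity
`b kᵀ A b k ≤ ‖b k‖² M`. Summing over `k` gives `Tr(Bᵀ A B) ≤ ‖B‖_F² M = βᵀ A β` for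
`β = ‖B‖_F • u`.
-/

open Matrix Finset

theorem exists_norm_eq_one_forall_le_norm_sq_mul {E : Type*} [NormedAddCommGroup E]
    [NormedSpace ℝ E] [FiniteDimensional ℝ E] [Nontrivial E] {f : E → ℝ} (hf : Continuous f)
    (hf_smul : ∀ (c : ℝ) (x : E), f (c • x) = c ^ 2 * f x) :
    ∃ u : E, ‖u‖ = 1 ∧ ∀ x, f x ≤ ‖x‖ ^ 2 * f u := by
  obtain ⟨u, hu, hmax⟩ := (isCompact_sphere (0 : E) 1).exists_isMaxOn
    (NormedSpace.sphere_nonempty.2 zero_le_one) hf.continuousOn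
  rw [mem_sphere_zero_iff_norm] at hu
  refine ⟨u, hu, fun x => ?_⟩
  rcases eq_or_ne x 0 with rfl | hx
  · have hf_zero : f 0 = 0 := by simpa using hf_smul 0 0
    simp [hf_zero]
  have hx_norm : ‖x‖ ≠ 0 := norm_ne_zero_iff.2 hx
  have hx_sphere : ‖x‖⁻¹ • x ∈ Metric.sphere (0 : E) 1 := by
    simp [norm_smul, hx_norm]
  calc f x = ‖x‖ ^ 2 * f (‖x‖⁻¹ • x) := by
        rw [hf_smul, ← mul_assoc, ← mul_pow, mul_inv_cancel₀ hx_norm, one_pow, one_mul]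
    _ ≤ ‖x‖ ^ 2 * f u := by gcongr; exact hmax hx_sphere

theorem dotProduct_mulVec_smul {n R : Type*} [Fintype n] [CommSemiring R]
    (A : Matrix n n R) (c : R) (x : n → R) :
    (c • x) ⬝ᵥ (A *ᵥ (c • x)) = c ^ 2 * (x ⬝ᵥ (A *ᵥ x)) := by
  rw [mulVec_smul, smul_dotProduct, dotProduct_smul, smul_eq_mul, smul_eq_mul, ← mul_assoc, sq]

theorem exists_sum_sq_eq_one_forall_dotProduct_mulVec_le {n : Type*} [Fintype n] [Nonempty n]
    (A : Matrix n n ℝ) :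
    ∃ u : n → ℝ, ∑ i, u i ^ 2 = 1 ∧
      ∀ x : n → ℝ, x ⬝ᵥ (A *ᵥ x) ≤ (∑ i, x i ^ 2) * (u ⬝ᵥ (A *ᵥ u)) := by
  obtain ⟨u, hu, hle⟩ := exists_norm_eq_one_forall_le_norm_sq_mul
    (f := fun v : EuclideanSpace ℝ n => v.ofLp ⬝ᵥ (A *ᵥ v.ofLp)) (by fun_prop)
    (fun c x => dotProduct_mulVec_smul A c x.ofLp)
  refine ⟨u.ofLp, by simpa [hu] using (EuclideanSpace.real_norm_sq_eq u).symm, fun x => ?_⟩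
  simpa [EuclideanSpace.real_norm_sq_eq] using hle (WithLp.toLp 2 x)

theorem trace_transpose_mul_mul {m n R : Type*} [Fintype m] [Fintype n] [CommSemiring R]
    (A : Matrix m m R) (B : Matrix m n R) :
    (Bᵀ * A * B).trace = ∑ k, Bᵀ k ⬝ᵥ (A *ᵥ Bᵀ k) := by
  refine sum_congr rfl fun k _ => ?_
  rw [diag_apply, mul_apply, dotProduct_mulVec, dotProduct]
  rfl

/-- **Lemma 2.** For any square matrix `A : p × p` and matrix `B : p × d`, there is a vector
`β` with Euclidean norm equal to the Frobenius norm of `B` such that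
`Tr(Bᵀ A B) ≤ βᵀ A β`. -/
theorem exists_vector_trace_le (p d : ℕ)
    (A : Matrix (Fin p) (Fin p) ℝ) (B : Matrix (Fin p) (Fin d) ℝ) :
    ∃ β : Fin p → ℝ,
      Real.sqrt (∑ i, (β i) ^ 2) = Real.sqrt (∑ i, ∑ j, (B i j) ^ 2) ∧
      (Bᵀ * A * B).trace ≤ β ⬝ᵥ (A *ᵥ β) := by
  rcases Nat.eq_zero_or_pos p with rfl | hp
  · exact ⟨0, by simp, by simp [trace]⟩
  have : Nonempty (Fin p) := ⟨⟨0, hp⟩⟩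
  obtain ⟨u, hu, hle⟩ := exists_sum_sq_eq_one_forall_dotProduct_mulVec_le A
  set t := √(∑ i, ∑ j, B i j ^ 2)
  have ht : t ^ 2 = ∑ i, ∑ j, B i j ^ 2 := Real.sq_sqrt (by positivity)
  refine ⟨t • u, ?_, ?_⟩
  · simp only [Pi.smul_apply, smul_eq_mul, mul_pow, ← mul_sum, hu, mul_one]
    exact Real.sqrt_sq (Real.sqrt_nonneg _)
  calc (Bᵀ * A * B).trace = ∑ k, Bᵀ k ⬝ᵥ (A *ᵥ Bᵀ k) := trace_transpose_mul_mul A B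
    _ ≤ ∑ k, (∑ i, B i k ^ 2) * (u ⬝ᵥ (A *ᵥ u)) := sum_le_sum fun k _ => hle _
    _ = t • u ⬝ᵥ (A *ᵥ (t • u)) := by
      rw [← sum_mul, sum_comm, ← ht, dotProduct_mulVec_smul]
end

section
/- For the least squares estimator B̂ = (XᵀX)⁺XᵀY with Y = XB + E, noise rows of E i.i.d. N(0, Σ_ε) independent of X, and test point x ~ N(0, Σ_x) independent of training data, the bias of the prediction risk conditional on X equals Tr(Bᵀ(XᵀX(XᵀX)⁺ − I)Σ_x((XᵀX)⁺XᵀX − I)B) and the variance equals Tr(Σ_ε)·Tr(Σ_x (XᵀX)⁺). -/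
open Matrix MeasureTheory ProbabilityTheory

instance {m n : Type*} : MeasurableSpace (Matrix m n ℝ) :=
  inferInstanceAs (MeasurableSpace (m → n → ℝ))

-- The Moore–Penrose pseudoinverse of a real matrix, defined (noncomputably) as the unique
-- matrix satisfying the four Penrose conditions.
open Classical in
noncomputable def moorePenrose {m n : ℕ} (A : Matrix (Fin m) (Fin n) ℝ) :
    Matrix (Fin n) (Fin m) ℝ :=
  if h : ∃ B : Matrix (Fin n) (Fin m) ℝ,
      A * B * A = A ∧ B * A * B = B ∧ (A * B)ᵀ = A * B ∧ (B * A)ᵀ = B * A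
  then h.choose else 0

/-!
Write `M = (XᵀX)⁺`. Both errors have the form `E[Tr((xC)ᵀ(xC))] = E[Tr(xᵀx · CCᵀ)]` for a random
matrix `C` independent of `x`: `C = (I − M XᵀX) B` for the bias and `C = −M Xᵀ E` for the
variance. Independence factors the expectation as `Tr(Σ_x · E[CCᵀ])`. Uncorrelated noise rows
give `E[EEᵀ] = Tr(Σ_ε) I`, and the Penrose identities `Mᵀ = M`, `M XᵀX M = M` reduce
`(M Xᵀ)(M Xᵀ)ᵀ` to `M`.
-/

namespace Matrix

variable {R : Type*} [CommRing R] {m n : Type*} [Fintype m] [Fintype n]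

def IsPenroseInverse (A : Matrix m n R) (M : Matrix n m R) : Prop :=
  A * M * A = A ∧ M * A * M = M ∧ (A * M)ᵀ = A * M ∧ (M * A)ᵀ = M * A

namespace IsPenroseInverse

variable {A : Matrix m n R} {M N : Matrix n m R}

theorem transpose (h : IsPenroseInverse A M) : IsPenroseInverse Aᵀ Mᵀ := by
  obtain ⟨h₁, h₂, h₃, h₄⟩ := h
  refine ⟨?_, ?_, ?_, ?_⟩
  · rw [← transpose_mul, ← transpose_mul, ← Matrix.mul_assoc, h₁]
  · rw [← transpose_mul, ← transpose_mul, ← Matrix.mul_assoc, h₂]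
  · rw [← transpose_mul, transpose_transpose, h₄]
  · rw [← transpose_mul, transpose_transpose, h₃]

theorem unique (hM : IsPenroseInverse A M) (hN : IsPenroseInverse A N) : M = N := by
  obtain ⟨hM₁, hM₂, hM₃, hM₄⟩ := hM
  obtain ⟨hN₁, hN₂, hN₃, hN₄⟩ := hN
  have hAM : A * M = A * N :=
    calc A * M = (A * N) * (A * M) := by rw [← Matrix.mul_assoc, hN₁]
      _ = ((A * M) * (A * N))ᵀ := by rw [transpose_mul, hM₃, hN₃]
      _ = A * N := by rw [← Matrix.mul_assoc, hM₁, hN₃]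
  have hMA : M * A = N * A :=
    calc M * A = (M * A) * (N * A) := by rw [Matrix.mul_assoc, ← Matrix.mul_assoc A, hN₁]
      _ = ((N * A) * (M * A))ᵀ := by rw [transpose_mul, hM₄, hN₄]
      _ = N * A := by rw [Matrix.mul_assoc, ← Matrix.mul_assoc A, hM₁, hN₄]
  calc M = M * A * M := hM₂.symm
    _ = N * A * N := by rw [hMA, Matrix.mul_assoc, hAM, ← Matrix.mul_assoc]
    _ = N := hN₂

end IsPenroseInverse

theorem trace_transpose_mul_self_mul {p d : Type*} [Fintype p] [Fintype d]
    (v : Matrix m p R) (C : Matrix p d R) :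
    ((v * C)ᵀ * (v * C)).trace = (vᵀ * v * (C * Cᵀ)).trace := by
  rw [transpose_mul, Matrix.mul_assoc, trace_mul_comm, Matrix.mul_assoc, Matrix.mul_assoc,
    Matrix.mul_assoc]

end Matrix

section MoorePenrose

variable {m n : ℕ} {A : Matrix (Fin m) (Fin n) ℝ}

theorem isPenroseInverse_moorePenrose (h : ∃ M, A.IsPenroseInverse M) :
    A.IsPenroseInverse (moorePenrose A) := by
  unfold moorePenrose
  split_ifs with h'
  exacts [h'.choose_spec, absurd h h']

theorem moorePenrose_eq_zero (h : ¬∃ M, A.IsPenroseInverse M) : moorePenrose A = 0 := by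
  unfold moorePenrose
  split_ifs with h'
  exacts [absurd h' h, rfl]

theorem moorePenrose_transpose (A : Matrix (Fin m) (Fin n) ℝ) :
    moorePenrose Aᵀ = (moorePenrose A)ᵀ := by
  by_cases h : ∃ M, A.IsPenroseInverse M
  · exact (isPenroseInverse_moorePenrose ⟨_, h.choose_spec.transpose⟩).unique
      (isPenroseInverse_moorePenrose h).transpose
  · have hT : ¬∃ M, Aᵀ.IsPenroseInverse M := fun ⟨M, hM⟩ =>
      h ⟨Mᵀ, by simpa using hM.transpose⟩
    rw [moorePenrose_eq_zero h, moorePenrose_eq_zero hT, transpose_zero]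

theorem moorePenrose_mul_mul_self (A : Matrix (Fin m) (Fin n) ℝ) :
    moorePenrose A * A * moorePenrose A = moorePenrose A := by
  by_cases h : ∃ M, A.IsPenroseInverse M
  · exact (isPenroseInverse_moorePenrose h).2.1
  · simp [moorePenrose_eq_zero h]

theorem transpose_moorePenrose_transpose_mul_self (X : Matrix (Fin m) (Fin n) ℝ) :
    (moorePenrose (Xᵀ * X))ᵀ = moorePenrose (Xᵀ * X) := by
  rw [← moorePenrose_transpose, transpose_mul, transpose_transpose]

theorem moorePenrose_transpose_mul_self_mul_transpose_mul_self (X : Matrix (Fin m) (Fin n) ℝ) :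
    moorePenrose (Xᵀ * X) * Xᵀ * (moorePenrose (Xᵀ * X) * Xᵀ)ᵀ = moorePenrose (Xᵀ * X) := by
  rw [transpose_mul, transpose_transpose, transpose_moorePenrose_transpose_mul_self,
    Matrix.mul_assoc, ← Matrix.mul_assoc Xᵀ, ← Matrix.mul_assoc]
  exact moorePenrose_mul_mul_self _

end MoorePenrose

instance {m n : Type*} [Countable m] [Countable n] : BorelSpace (Matrix m n ℝ) :=
  inferInstanceAs (BorelSpace (m → n → ℝ))

section EntrywiseIntegral

variable {Ω : Type*} [MeasurableSpace Ω] {μ : Measure Ω} {k l m n : Type*}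

-- Matrices carry no global norm in Mathlib, so the mean of a random matrix is taken entrywise.
noncomputable def entrywiseIntegral (F : Ω → Matrix m n ℝ) (μ : Measure Ω) : Matrix m n ℝ :=
  Matrix.of fun i j => ∫ ω, F ω i j ∂μ

@[simp]
theorem entrywiseIntegral_apply (F : Ω → Matrix m n ℝ) (i : m) (j : n) :
    entrywiseIntegral F μ i j = ∫ ω, F ω i j ∂μ :=
  rfl

@[simp]
theorem entrywiseIntegral_const [IsProbabilityMeasure μ] (C : Matrix m n ℝ) :
    entrywiseIntegral (fun _ => C) μ = C := by
  ext i j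
  simp

variable [Fintype m] [Fintype n]

theorem integrable_mul_mul_apply {F : Ω → Matrix m n ℝ}
    (hF : ∀ i j, Integrable (fun ω => F ω i j) μ) (P : Matrix k m ℝ) (Q : Matrix n l ℝ)
    (i : k) (j : l) : Integrable (fun ω => (P * F ω * Q) i j) μ := by
  simp only [Matrix.mul_apply]
  exact integrable_finsetSum _ fun b _ =>
    (integrable_finsetSum _ fun a _ => (hF a b).const_mul _).mul_const _

theorem entrywiseIntegral_mul_mul {F : Ω → Matrix m n ℝ}
    (hF : ∀ i j, Integrable (fun ω => F ω i j) μ) (P : Matrix k m ℝ) (Q : Matrix n l ℝ) :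
    entrywiseIntegral (fun ω => P * F ω * Q) μ = P * entrywiseIntegral F μ * Q := by
  ext i j
  simp only [entrywiseIntegral_apply, Matrix.mul_apply]
  rw [integral_finsetSum _ fun b _ =>
    (integrable_finsetSum _ fun a _ => (hF a b).const_mul _).mul_const _]
  refine Finset.sum_congr rfl fun b _ => ?_
  rw [integral_mul_const, integral_finsetSum _ fun a _ => (hF a b).const_mul _]
  simp only [integral_const_mul]

theorem integral_trace_mul_of_indepFun {A : Ω → Matrix n m ℝ} {G : Ω → Matrix m n ℝ}
    (hAG : IndepFun A G μ) (hA : ∀ i j, Integrable (fun ω => A ω i j) μ)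
    (hG : ∀ i j, Integrable (fun ω => G ω i j) μ) :
    ∫ ω, (A ω * G ω).trace ∂μ = (entrywiseIntegral A μ * entrywiseIntegral G μ).trace := by
  have hAG' : ∀ i j, IndepFun (fun ω => A ω i j) (fun ω => G ω j i) μ := fun i j =>
    hAG.comp ((measurable_pi_apply j).comp (measurable_pi_apply i))
      ((measurable_pi_apply i).comp (measurable_pi_apply j))
  have hAG_int : ∀ i j, Integrable (fun ω => A ω i j * G ω j i) μ := fun i j =>
    (hAG' i j).integrable_mul (hA i j) (hG j i)
  simp only [Matrix.trace, Matrix.diag, Matrix.mul_apply, entrywiseIntegral_apply]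
  rw [integral_finsetSum _ fun i _ => integrable_finsetSum _ fun j _ => hAG_int i j]
  refine Finset.sum_congr rfl fun i _ => ?_
  rw [integral_finsetSum _ fun j _ => hAG_int i j]
  exact Finset.sum_congr rfl fun j _ => (hAG' i j).integral_mul_eq_mul_integral
    (hA i j).aestronglyMeasurable (hG j i).aestronglyMeasurable

end EntrywiseIntegral

section SecondMoments

variable {Ω : Type*} [MeasurableSpace Ω] {μ : Measure Ω} {m n p d : Type*} [Fintype d]

theorem integrable_mul_transpose_self_apply {E : Ω → Matrix n d ℝ}
    (hE : ∀ i i' l, Integrable (fun ω => E ω i l * E ω i' l) μ) (i i' : n) :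
    Integrable (fun ω => (E ω * (E ω)ᵀ) i i') μ := by
  simp only [Matrix.mul_apply, transpose_apply]
  exact integrable_finsetSum _ fun l _ => hE i i' l

theorem entrywiseIntegral_mul_transpose_self [DecidableEq n] {E : Ω → Matrix n d ℝ}
    {S : Matrix d d ℝ} (hE : ∀ i i' l, Integrable (fun ω => E ω i l * E ω i' l) μ)
    (hcov : ∀ i j k, ∫ ω, E ω i j * E ω i k ∂μ = S j k)
    (hrows : ∀ i i', i ≠ i' → ∀ j k, ∫ ω, E ω i j * E ω i' k ∂μ = 0) :
    entrywiseIntegral (fun ω => E ω * (E ω)ᵀ) μ = S.trace • 1 := by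
  ext i i'
  simp only [entrywiseIntegral_apply, Matrix.mul_apply, transpose_apply, Matrix.smul_apply,
    one_apply, smul_eq_mul, mul_ite, mul_one, mul_zero]
  rw [integral_finsetSum _ fun l _ => hE i i' l]
  split_ifs with h
  · subst h
    exact Finset.sum_congr rfl fun l _ => hcov i l l
  · exact Finset.sum_eq_zero fun l _ => hrows i i' h l l

variable [Fintype m] [Fintype p] {x : Ω → Matrix m p ℝ}

theorem integral_trace_transpose_mul_self_of_indepFun {C : Ω → Matrix p d ℝ}
    (hxC : IndepFun x C μ) (hx : ∀ j k, Integrable (fun ω => ((x ω)ᵀ * x ω) j k) μ)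
    (hC : ∀ j k, Integrable (fun ω => (C ω * (C ω)ᵀ) j k) μ) :
    ∫ ω, ((x ω * C ω)ᵀ * (x ω * C ω)).trace ∂μ =
      (entrywiseIntegral (fun ω => (x ω)ᵀ * x ω) μ *
        entrywiseIntegral (fun ω => C ω * (C ω)ᵀ) μ).trace := by
  simp_rw [trace_transpose_mul_self_mul]
  exact integral_trace_mul_of_indepFun
    (hxC.comp (continuous_id.matrix_transpose.matrix_mul continuous_id).measurable
      (continuous_id.matrix_mul continuous_id.matrix_transpose).measurable) hx hC

theorem integral_trace_transpose_mul_self_const [IsProbabilityMeasure μ]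
    (hx : ∀ j k, Integrable (fun ω => ((x ω)ᵀ * x ω) j k) μ) (C : Matrix p d ℝ) :
    ∫ ω, ((x ω * C)ᵀ * (x ω * C)).trace ∂μ =
      (Cᵀ * entrywiseIntegral (fun ω => (x ω)ᵀ * x ω) μ * C).trace := by
  rw [integral_trace_transpose_mul_self_of_indepFun (indepFun_const_right x C) hx
    (fun _ _ => integrable_const _), entrywiseIntegral_const, ← Matrix.mul_assoc,
    trace_mul_cycle]

theorem integral_trace_transpose_mul_self_mul_noise [Fintype n] [DecidableEq n]
    {E : Ω → Matrix n d ℝ} {S : Matrix d d ℝ} (hxE : IndepFun x E μ)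
    (hx : ∀ j k, Integrable (fun ω => ((x ω)ᵀ * x ω) j k) μ)
    (hE : ∀ i i' l, Integrable (fun ω => E ω i l * E ω i' l) μ)
    (hcov : ∀ i j k, ∫ ω, E ω i j * E ω i k ∂μ = S j k)
    (hrows : ∀ i i', i ≠ i' → ∀ j k, ∫ ω, E ω i j * E ω i' k ∂μ = 0) (P : Matrix p n ℝ) :
    ∫ ω, ((x ω * (P * E ω))ᵀ * (x ω * (P * E ω))).trace ∂μ =
      S.trace * (entrywiseIntegral (fun ω => (x ω)ᵀ * x ω) μ * (P * Pᵀ)).trace := by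
  have hPE : ∀ ω, P * E ω * (P * E ω)ᵀ = P * (E ω * (E ω)ᵀ) * Pᵀ := fun ω => by
    simp only [transpose_mul, Matrix.mul_assoc]
  have hxPE : IndepFun x (fun ω => P * E ω) μ :=
    hxE.comp measurable_id (continuous_const.matrix_mul continuous_id).measurable
  have hEE := integrable_mul_transpose_self_apply hE
  rw [integral_trace_transpose_mul_self_of_indepFun hxPE hx
    (by simpa only [hPE] using integrable_mul_mul_apply hEE P Pᵀ)]
  simp_rw [hPE]
  rw [entrywiseIntegral_mul_mul hEE, entrywiseIntegral_mul_transpose_self hE hcov hrows,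
    Matrix.mul_smul, Matrix.mul_one, Matrix.smul_mul, Matrix.mul_smul, trace_smul,
    smul_eq_mul]

end SecondMoments

theorem least_squares_bias_and_variance_general {Ω : Type*} [MeasurableSpace Ω] (μ : Measure Ω)
    [IsProbabilityMeasure μ] {n p d : ℕ}
    (X : Matrix (Fin n) (Fin p) ℝ) (B : Matrix (Fin p) (Fin d) ℝ)
    (Se : Matrix (Fin d) (Fin d) ℝ) (Sx : Matrix (Fin p) (Fin p) ℝ)
    (E : Ω → Matrix (Fin n) (Fin d) ℝ) (x : Ω → Matrix (Fin 1) (Fin p) ℝ)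
    -- noise rows are centered with covariance `Σ_ε`, uncorrelated across distinct rows
    (hEcov : ∀ i : Fin n, ∀ j k : Fin d, ∫ ω, E ω i j * E ω i k ∂μ = Se j k)
    (hErows : ∀ i i' : Fin n, i ≠ i' → ∀ j k : Fin d, ∫ ω, E ω i j * E ω i' k ∂μ = 0)
    -- the test point is centered with covariance `Σ_x` and independent of the noise
    (hxcov : ∀ j k : Fin p, ∫ ω, x ω 0 j * x ω 0 k ∂μ = Sx j k)
    (hindep : IndepFun x E μ)
    -- integrability of all second-moment quantities involved
    (hintE : ∀ i i' j k, Integrable (fun ω => E ω i j * E ω i' k) μ)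
    (hintx : ∀ j k, Integrable (fun ω => x ω 0 j * x ω 0 k) μ)
    -- the least squares estimator and its conditional mean
    (Bhat : Ω → Matrix (Fin p) (Fin d) ℝ)
    (hBhat : ∀ ω, Bhat ω = moorePenrose (Xᵀ * X) * Xᵀ * (X * B + E ω))
    (EB : Matrix (Fin p) (Fin d) ℝ) (hEB : EB = moorePenrose (Xᵀ * X) * Xᵀ * X * B) :
    (∫ ω, ((x ω * B - x ω * EB)ᵀ * (x ω * B - x ω * EB)).trace ∂μ =
        (Bᵀ * (Xᵀ * X * moorePenrose (Xᵀ * X) - 1) * Sx *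
          (moorePenrose (Xᵀ * X) * (Xᵀ * X) - 1) * B).trace) ∧
    (∫ ω, ((x ω * EB - x ω * Bhat ω)ᵀ * (x ω * EB - x ω * Bhat ω)).trace ∂μ =
        Se.trace * (Sx * moorePenrose (Xᵀ * X)).trace) := by
  have hx : ∀ j k, Integrable (fun ω => ((x ω)ᵀ * x ω) j k) μ := by
    simpa [Matrix.mul_apply] using hintx
  have hSx : entrywiseIntegral (fun ω => (x ω)ᵀ * x ω) μ = Sx := by
    ext j k
    simp [Matrix.mul_apply, hxcov]
  constructor
  · simp_rw [← Matrix.mul_sub]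
    rw [integral_trace_transpose_mul_self_const hx, hSx, hEB]
    congr 1
    simp only [transpose_sub, transpose_mul, transpose_transpose,
      transpose_moorePenrose_transpose_mul_self, Matrix.sub_mul, Matrix.mul_sub, Matrix.mul_one,
      Matrix.mul_assoc]
    abel
  · have hv : ∀ ω, x ω * EB - x ω * Bhat ω = x ω * (-(moorePenrose (Xᵀ * X) * Xᵀ) * E ω) := by
      intro ω
      rw [hBhat, hEB, ← Matrix.mul_sub]
      simp only [Matrix.mul_add, Matrix.neg_mul, Matrix.mul_assoc]
      abel_nf
    simp_rw [hv]
    rw [integral_trace_transpose_mul_self_mul_noise hindep hx (fun i i' l => hintE i i' l l)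
      hEcov hErows, hSx, transpose_neg, Matrix.mul_neg, Matrix.neg_mul, neg_neg,
      moorePenrose_transpose_mul_self_mul_transpose_mul_self]

/-- **Lemma 1.** For the least squares estimator `B̂ = (XᵀX)⁺XᵀY` with `Y = XB + E`, noise
rows of `E` centered with covariance `Σ_ε` and uncorrelated across rows (as for i.i.d.
`N(0, Σ_ε)` rows) independent of everything, and test point `x` centered with covariance `Σ_x`
(as for `N(0, Σ_x)`) independent of the training data: conditionally on the fixed design `X`,
the bias of the prediction risk equals `Tr(Bᵀ(XᵀX(XᵀX)⁺ − I)Σ_x((XᵀX)⁺XᵀX − I)B)` and the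
variance equals `Tr(Σ_ε)·Tr(Σ_x (XᵀX)⁺)`. -/
theorem least_squares_bias_and_variance {Ω : Type*} [MeasurableSpace Ω] (μ : Measure Ω)
    [IsProbabilityMeasure μ] {n p d : ℕ}
    (X : Matrix (Fin n) (Fin p) ℝ) (B : Matrix (Fin p) (Fin d) ℝ)
    (Se : Matrix (Fin d) (Fin d) ℝ) (Sx : Matrix (Fin p) (Fin p) ℝ)
    (E : Ω → Matrix (Fin n) (Fin d) ℝ) (x : Ω → Matrix (Fin 1) (Fin p) ℝ)
    (hEmeas : Measurable E) (hxmeas : Measurable x)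
    -- noise rows are centered with covariance `Σ_ε`, uncorrelated across distinct rows
    (hEzero : ∀ i j, ∫ ω, E ω i j ∂μ = 0)
    (hEcov : ∀ i : Fin n, ∀ j k : Fin d, ∫ ω, E ω i j * E ω i k ∂μ = Se j k)
    (hErows : ∀ i i' : Fin n, i ≠ i' → ∀ j k : Fin d, ∫ ω, E ω i j * E ω i' k ∂μ = 0)
    -- the test point is centered with covariance `Σ_x` and independent of the noise
    (hxzero : ∀ j, ∫ ω, x ω 0 j ∂μ = 0)
    (hxcov : ∀ j k : Fin p, ∫ ω, x ω 0 j * x ω 0 k ∂μ = Sx j k)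
    (hindep : IndepFun x E μ)
    -- integrability of all second-moment quantities involved
    (hintE : ∀ i i' j k, Integrable (fun ω => E ω i j * E ω i' k) μ)
    (hintx : ∀ j k, Integrable (fun ω => x ω 0 j * x ω 0 k) μ)
    -- the least squares estimator and its conditional mean
    (Bhat : Ω → Matrix (Fin p) (Fin d) ℝ)
    (hBhat : ∀ ω, Bhat ω = moorePenrose (Xᵀ * X) * Xᵀ * (X * B + E ω))
    (EB : Matrix (Fin p) (Fin d) ℝ) (hEB : EB = moorePenrose (Xᵀ * X) * Xᵀ * X * B) :
    (∫ ω, ((x ω * B - x ω * EB)ᵀ * (x ω * B - x ω * EB)).trace ∂μ =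
        (Bᵀ * (Xᵀ * X * moorePenrose (Xᵀ * X) - 1) * Sx *
          (moorePenrose (Xᵀ * X) * (Xᵀ * X) - 1) * B).trace) ∧
    (∫ ω, ((x ω * EB - x ω * Bhat ω)ᵀ * (x ω * EB - x ω * Bhat ω)).trace ∂μ =
        Se.trace * (Sx * moorePenrose (Xᵀ * X)).trace) :=
  least_squares_bias_and_variance_general μ X B Se Sx E x hEcov hErows hxcov hindep hintE hintx Bhat
    hBhat EB hEB
end
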